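/- Let V be a real vector space with a symmetric bilinear form B, and let β ∈ V satisfy B(β,β) > 0 and assume B(v,v) ≤ 0 for every v with B(β,v) = 0. Let β_0, β_1, …, β_r ∈ V with r ≥ 1 and β = β_0 + β_1 + ⋯ + β_r, and let c > 0 be a real number such that B(β, β_k) ≥ c and B(β, β − β_k) ≥ c for every k = 0, …, r. Then B(β,β) − ∑_{k=0}^{r} B(β_k, β_k) ≥ c. -/

import Mathlib

/-!
Write `b = B(β,β)` and `a_k = B(β,β_k)`, so that `∑ a_k = b`. Projecting `β_k` onto the orthogonal
complement of `β`, where `B` is negative semidefinite, gives the Hodge index bound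
`B(β_k,β_k) ≤ a_k² / b`. Hence `B(β,β) - ∑ B(β_k,β_k) ≥ b - ∑ a_k² / b = ∑ a_k (b - a_k) / b`, and
each summand `xy/(x+y)` with `x = a_k`, `y = b - a_k` is at least `min(x,y)/2 ≥ c/2`. With at
least two summands the total is at least `c`.
-/

open Finset

theorem apply_self_le_sq_div_of_nonpos_on_orthogonal {V : Type*} [AddCommGroup V] [Module ℝ V]
    (B : V →ₗ[ℝ] V →ₗ[ℝ] ℝ) (hsymm : ∀ u v : V, B u v = B v u) {β : V} (hβ : 0 < B β β)
    (hneg : ∀ v : V, B β v = 0 → B v v ≤ 0) (v : V) :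
    B v v ≤ B β v ^ 2 / B β β := by
  set w := v - (B β v / B β β) • β
  have hw_orth : B β w = 0 := by
    simp only [w, map_sub, map_smul, smul_eq_mul]
    field_simp
    ring
  have hw_self : B w w = B v v - B β v ^ 2 / B β β := by
    simp only [w, map_sub, map_smul, LinearMap.sub_apply, LinearMap.smul_apply, smul_eq_mul,
      hsymm v β]
    field_simp
    ring
  linarith [hneg w hw_orth]

theorem min_div_two_le_mul_div_add {x y : ℝ} (hx : 0 < x) (hy : 0 < y) :
    min x y / 2 ≤ x * y / (x + y) := by
  rw [div_le_div_iff₀ two_pos (add_pos hx hy)]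
  nlinarith [mul_le_mul_of_nonneg_right (min_le_right x y) hx.le,
    mul_le_mul_of_nonneg_right (min_le_left x y) hy.le]

theorem sub_sum_sq_div_eq_sum_mul_sub_div {ι : Type*} (s : Finset ι) (a : ι → ℝ) {b : ℝ}
    (hb : b ≠ 0) (hsum : ∑ i ∈ s, a i = b) :
    b - ∑ i ∈ s, a i ^ 2 / b = ∑ i ∈ s, a i * (b - a i) / b := by
  have hterm : ∀ i ∈ s, a i * (b - a i) / b = a i - a i ^ 2 / b := fun i _ => by
    field_simp
  rw [sum_congr rfl hterm, sum_sub_distrib, hsum]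

theorem le_sub_sum_sq_div {ι : Type*} [Fintype ι] (hcard : 2 ≤ Fintype.card ι) (a : ι → ℝ)
    {b c : ℝ} (hc : 0 < c) (ha : ∀ i, c ≤ a i) (hba : ∀ i, c ≤ b - a i) (hsum : ∑ i, a i = b) :
    c ≤ b - ∑ i, a i ^ 2 / b := by
  obtain ⟨i₀⟩ := Fintype.card_pos_iff.mp (by omega : 0 < Fintype.card ι)
  have hb : 0 < b := by linarith [ha i₀, hba i₀]
  have hterm : ∀ i ∈ univ, c / 2 ≤ a i * (b - a i) / b := fun i _ => by
    have hmin := min_div_two_le_mul_div_add (hc.trans_le (ha i)) (hc.trans_le (hba i))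
    rw [add_sub_cancel] at hmin
    linarith [le_min (ha i) (hba i)]
  have hcard' : (2 : ℝ) ≤ Fintype.card ι := by exact_mod_cast hcard
  calc c ≤ Fintype.card ι * (c / 2) := by nlinarith
    _ = ∑ _i : ι, c / 2 := by rw [sum_const, card_univ, nsmul_eq_mul]
    _ ≤ ∑ i, a i * (b - a i) / b := sum_le_sum hterm
    _ = b - ∑ i, a i ^ 2 / b := (sub_sum_sq_div_eq_sum_mul_sub_div _ a hb.ne' hsum).symm

theorem stmt_3 (V : Type*) [AddCommGroup V] [Module ℝ V]
    (B : V →ₗ[ℝ] V →ₗ[ℝ] ℝ) (hsymm : ∀ u v : V, B u v = B v u)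
    (β : V) (hβ : 0 < B β β)
    (hneg : ∀ v : V, B β v = 0 → B v v ≤ 0)
    (r : ℕ) (hr : 1 ≤ r) (βk : Fin (r + 1) → V)
    (hsum : β = ∑ k, βk k)
    (c : ℝ) (hc : 0 < c)
    (h1 : ∀ k, c ≤ B β (βk k)) (h2 : ∀ k, c ≤ B β (β - βk k)) :
    B β β - ∑ k, B (βk k) (βk k) ≥ c := by
  have hcard : 2 ≤ Fintype.card (Fin (r + 1)) := by simp only [Fintype.card_fin]; omega
  have hbound := le_sub_sum_sq_div hcard (fun k => B β (βk k)) hc h1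
    (fun k => by simpa only [map_sub] using h2 k) (by rw [← map_sum, ← hsum])
  have hhodge : ∑ k, B (βk k) (βk k) ≤ ∑ k, B β (βk k) ^ 2 / B β β :=
    sum_le_sum fun k _ => apply_self_le_sq_div_of_nonpos_on_orthogonal B hsymm hβ hneg (βk k)
  linarith
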